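/- For any binary sequence ω with complement ω̄, the map Ψ : ℤ → ℤ, Ψ(z) = −z + 1, is a graph isomorphism from X_ω to X_{ω̄}: it maps E_ω^0 onto E_{ω̄}^0 and each E_ω^n onto E_{ω̄}^n. -/

import Mathlib

/-! Every edge set of `X_ω` is a coset lattice `{ {c z - b, c (z + 1) - b} : z ∈ ℤ }`, and the
reflection `z ↦ -z + 1` carries the lattice with offset `b` to the one with offset `-1 - b`.
Since `a_n^ω + a_n^{ω̄} = -1`, this is exactly the lattice of `E_{ω̄}^n`. -/

def aseq (x : ℕ → ℤ) (n : ℕ) : ℤ :=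
  (∑ i ∈ Finset.range n, x (i + 1) * 2 ^ i) - 2 ^ (n - 1)

def edgeSym (x : ℕ → ℤ) : ℕ → Set (Sym2 ℤ)
  | 0 => {e | ∃ z : ℤ, e = s(z, z + 1)}
  | n + 1 => {e | ∃ z : ℤ,
      e = s(2 ^ (n + 1) * z - aseq x (n + 1), 2 ^ (n + 1) * (z + 1) - aseq x (n + 1))}

-- Stated at `n + 1`: the truncated `0 - 1` gives `aseq x 0 = -1` for every `x`.
lemma aseq_compl_succ (x : ℕ → ℤ) (n : ℕ) :
    aseq (fun i => 1 - x i) (n + 1) = -1 - aseq x (n + 1) := by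
  have hgeom : ∑ i ∈ Finset.range (n + 1), (2 : ℤ) ^ i = 2 ^ (n + 1) - 1 := by
    simpa using geom_sum_mul (2 : ℤ) (n + 1)
  simp only [aseq, sub_mul, one_mul, Finset.sum_sub_distrib, hgeom, Nat.add_sub_cancel]
  ring

def latticeEdges (c b : ℤ) : Set (Sym2 ℤ) :=
  {e | ∃ z : ℤ, e = s(c * z - b, c * (z + 1) - b)}

lemma latticeEdges_one (b b' : ℤ) : latticeEdges 1 b = latticeEdges 1 b' := by
  suffices h : ∀ b b' : ℤ, latticeEdges 1 b ⊆ latticeEdges 1 b' from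
    (h b b').antisymm (h b' b)
  rintro b b' _ ⟨z, rfl⟩
  exact ⟨z - b + b', by ring_nf⟩

lemma edgeSym_zero (x : ℕ → ℤ) (b : ℤ) : edgeSym x 0 = latticeEdges 1 b := by
  rw [latticeEdges_one b 0]
  simp [edgeSym, latticeEdges]

lemma edgeSym_succ (x : ℕ → ℤ) (n : ℕ) :
    edgeSym x (n + 1) = latticeEdges (2 ^ (n + 1)) (aseq x (n + 1)) := rfl

lemma map_reflect_latticeEdges_subset (c b : ℤ) :
    Sym2.map (fun z : ℤ => -z + 1) '' latticeEdges c b ⊆ latticeEdges c (-1 - b) := by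
  rintro _ ⟨_, ⟨z, rfl⟩, rfl⟩
  refine ⟨-z - 1, ?_⟩
  rw [Sym2.map_mk, Sym2.eq_swap]
  congr 1 <;> ring

lemma map_reflect_latticeEdges (c b : ℤ) :
    Sym2.map (fun z : ℤ => -z + 1) '' latticeEdges c b = latticeEdges c (-1 - b) := by
  have hinv : Function.Involutive (Sym2.map fun z : ℤ => -z + 1) := fun e => by
    induction e using Sym2.ind with
    | _ a b => simp
  refine (map_reflect_latticeEdges_subset c b).antisymm fun e he => ⟨_, ?_, hinv e⟩
  simpa using map_reflect_latticeEdges_subset c (-1 - b) ⟨e, he, rfl⟩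

theorem stmt11_general (x : ℕ → ℤ) :
    Function.Bijective (fun z : ℤ => -z + 1) ∧
    ∀ k : ℕ, Sym2.map (fun z : ℤ => -z + 1) '' edgeSym x k
      = edgeSym (fun i => 1 - x i) k := by
  refine ⟨Function.Involutive.bijective fun z => by ring, ?_⟩
  rintro (_ | n)
  · rw [edgeSym_zero x 0, map_reflect_latticeEdges, edgeSym_zero]
  · rw [edgeSym_succ, map_reflect_latticeEdges, edgeSym_succ, aseq_compl_succ]

theorem stmt11 (x : ℕ → ℤ) (hx : ∀ i, x i = 0 ∨ x i = 1) :
    Function.Bijective (fun z : ℤ => -z + 1) ∧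
    ∀ k : ℕ, Sym2.map (fun z : ℤ => -z + 1) '' edgeSym x k
      = edgeSym (fun i => 1 - x i) k :=
  stmt11_general x
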